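/- Let G be a group and M a finitely generated ℤ[G]-module. Then any two filling norms on M are linearly equivalent: if ‖·‖_η and ‖·‖_{η'} are filling norms on M induced by surjections η : F → M and η' : F' → M from based finitely generated free ℤ[G]-modules, then there exists a constant C > 0 such that ‖m‖_{η'} ≤ C·‖m‖_η and ‖m‖_η ≤ C·‖m‖_{η'} for all m ∈ M. -/

import Mathlib

/-!
Since `F` is free, `η` lifts through the surjection `η'` to a `ℤ[G]`-linear map
`φ : F → F'` with `η' ∘ φ = η`. Every `ℤ[G]`-linear map between based free modules is
`ℓ¹`-Lipschitz, because the `ℓ¹`-norm on `ℤ[G]` is submultiplicative; so `φ` sends a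
minimal filling `x` of `m` to a filling of `m` of norm at most `C ‖x‖₁`. Exchanging `η`
and `η'` gives the other inequality.
-/

/-- The ℓ1-norm on the based finitely generated free `ℤ[G]`-module `Fin r →₀ ℤ[G]`,
induced by the free `ℤ`-basis `{g • eᵢ}`: `‖x‖₁ = ∑_{i,g} |x_{i,g}|`. -/
noncomputable def l1 {G : Type*} [Group G] {r : ℕ}
    (x : Fin r →₀ MonoidAlgebra ℤ G) : ℕ :=
  x.sum fun _ a => Finsupp.sum a.coeff fun _ z => z.natAbs

/-- The filling norm on `M` induced by a surjection `η` from a based finitely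
generated free `ℤ[G]`-module: `‖m‖_η = min { ‖x‖₁ : η x = m }`. -/
noncomputable def fillNorm {G : Type*} [Group G] {r : ℕ}
    {M : Type*} [AddCommGroup M] [Module (MonoidAlgebra ℤ G) M]
    (η : (Fin r →₀ MonoidAlgebra ℤ G) →ₗ[MonoidAlgebra ℤ G] M) (m : M) : ℕ :=
  sInf {n : ℕ | ∃ x, η x = m ∧ l1 x = n}

namespace Finsupp

variable {α β : Type*} [AddCommMonoid β] {N : β → ℕ}

theorem sum_add_le_of_subadditive (h0 : N 0 = 0) (hadd : ∀ a b, N (a + b) ≤ N a + N b)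
    (f g : α →₀ β) :
    (f + g).sum (fun _ => N) ≤ f.sum (fun _ => N) + g.sum (fun _ => N) := by
  classical
  have hsum {s : Finset α} (h : α →₀ β) (hs : h.support ⊆ s) :
      h.sum (fun _ => N) = ∑ a ∈ s, N (h a) :=
    sum_of_support_subset h hs _ fun _ _ => h0
  rw [hsum _ support_add, hsum f Finset.subset_union_left, hsum g Finset.subset_union_right,
    ← Finset.sum_add_distrib]
  exact Finset.sum_le_sum fun a _ => hadd _ _

end Finsupp

namespace MonoidAlgebra

variable {G : Type*}

noncomputable def l1Norm (a : MonoidAlgebra ℤ G) : ℕ :=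
  a.coeff.sum fun _ z => z.natAbs

@[simp]
theorem l1Norm_zero : l1Norm (0 : MonoidAlgebra ℤ G) = 0 := by
  simp [l1Norm]

theorem l1Norm_add_le (a b : MonoidAlgebra ℤ G) : l1Norm (a + b) ≤ l1Norm a + l1Norm b :=
  Finsupp.sum_add_le_of_subadditive Int.natAbs_zero Int.natAbs_add_le a.coeff b.coeff

@[simp]
theorem l1Norm_single (g : G) (z : ℤ) : l1Norm (single g z) = z.natAbs :=
  Finsupp.sum_single_index rfl

theorem l1Norm_mul_le [Mul G] (a b : MonoidAlgebra ℤ G) :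
    l1Norm (a * b) ≤ l1Norm a * l1Norm b := by
  have hsub :=
    Finset.le_sum_of_subadditive (ι := G) (l1Norm (G := G)) l1Norm_zero.le l1Norm_add_le
  rw [mul_def]
  calc l1Norm (a.coeff.sum fun g y => b.coeff.sum fun h z => single (g * h) (y * z))
      ≤ a.coeff.sum fun g y => l1Norm (b.coeff.sum fun h z => single (g * h) (y * z)) :=
        hsub _ _
    _ ≤ a.coeff.sum fun g y => b.coeff.sum fun h z => l1Norm (single (g * h) (y * z)) :=
        Finset.sum_le_sum fun _ _ => hsub _ _
    _ = l1Norm a * l1Norm b := by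
        simp only [l1Norm_single, Int.natAbs_mul, Finsupp.sum]
        exact (Finset.sum_mul_sum _ _ _ _).symm

end MonoidAlgebra

open MonoidAlgebra

section l1

variable {G : Type*} [Group G] {r r' : ℕ}

@[simp]
theorem l1_zero : l1 (0 : Fin r →₀ MonoidAlgebra ℤ G) = 0 := by
  simp [l1]

theorem l1_add_le (x y : Fin r →₀ MonoidAlgebra ℤ G) : l1 (x + y) ≤ l1 x + l1 y :=
  Finsupp.sum_add_le_of_subadditive l1Norm_zero l1Norm_add_le x y

theorem l1_smul_le (a : MonoidAlgebra ℤ G) (x : Fin r →₀ MonoidAlgebra ℤ G) :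
    l1 (a • x) ≤ l1Norm a * l1 x := by
  classical
  have hsum {s : Finset (Fin r)} (y : Fin r →₀ MonoidAlgebra ℤ G) (hs : y.support ⊆ s) :
      l1 y = ∑ i ∈ s, l1Norm (y i) :=
    Finsupp.sum_of_support_subset y hs _ fun _ _ => l1Norm_zero
  rw [hsum _ Finsupp.support_smul, hsum x subset_rfl, Finset.mul_sum]
  exact Finset.sum_le_sum fun i _ => l1Norm_mul_le a (x i)

theorem exists_l1_map_le_mul
    (φ : (Fin r →₀ MonoidAlgebra ℤ G) →ₗ[MonoidAlgebra ℤ G] (Fin r' →₀ MonoidAlgebra ℤ G)) :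
    ∃ C : ℕ, ∀ x, l1 (φ x) ≤ C * l1 x := by
  set C := ∑ i, l1 (φ (Finsupp.single i 1))
  refine ⟨C, fun x => ?_⟩
  have hφx : φ x = x.sum fun i a => a • φ (Finsupp.single i 1) := by
    conv_lhs => rw [← x.sum_single]
    rw [map_finsuppSum]
    exact Finsupp.sum_congr fun i _ => by rw [← Finsupp.smul_single_one, map_smul]
  calc l1 (φ x) ≤ x.sum fun i a => l1 (a • φ (Finsupp.single i 1)) := by
        rw [hφx]; exact Finset.le_sum_of_subadditive l1 l1_zero.le l1_add_le _ _
    _ ≤ x.sum fun _ a => l1Norm a * C :=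
        Finset.sum_le_sum fun i _ => (l1_smul_le _ _).trans <| Nat.mul_le_mul_left _ <|
          Finset.single_le_sum (f := fun j => l1 (φ (Finsupp.single j 1)))
            (fun _ _ => Nat.zero_le _) (Finset.mem_univ i)
    _ = C * l1 x := by rw [Finsupp.sum, ← Finset.sum_mul, Nat.mul_comm]; rfl

end l1

section fillNorm

variable {G : Type*} [Group G] {M : Type*} [AddCommGroup M] [Module (MonoidAlgebra ℤ G) M]
  {r r' : ℕ}

theorem fillNorm_le_l1 (η : (Fin r →₀ MonoidAlgebra ℤ G) →ₗ[MonoidAlgebra ℤ G] M)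
    (x : Fin r →₀ MonoidAlgebra ℤ G) : fillNorm η (η x) ≤ l1 x :=
  Nat.sInf_le ⟨x, rfl, rfl⟩

theorem exists_l1_eq_fillNorm {η : (Fin r →₀ MonoidAlgebra ℤ G) →ₗ[MonoidAlgebra ℤ G] M}
    (hη : Function.Surjective η) (m : M) : ∃ x, η x = m ∧ l1 x = fillNorm η m :=
  have ⟨x, hx⟩ := hη m
  Nat.sInf_mem (s := {n | ∃ x, η x = m ∧ l1 x = n}) ⟨l1 x, x, hx, rfl⟩

theorem exists_fillNorm_le_mul_fillNorm
    {η : (Fin r →₀ MonoidAlgebra ℤ G) →ₗ[MonoidAlgebra ℤ G] M} (hη : Function.Surjective η)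
    {η' : (Fin r' →₀ MonoidAlgebra ℤ G) →ₗ[MonoidAlgebra ℤ G] M} (hη' : Function.Surjective η') :
    ∃ C : ℕ, ∀ m, fillNorm η' m ≤ C * fillNorm η m := by
  obtain ⟨φ, hφ⟩ := Module.projective_lifting_property η' η hη'
  obtain ⟨C, hC⟩ := exists_l1_map_le_mul φ
  refine ⟨C, fun m => ?_⟩
  obtain ⟨x, rfl, hx⟩ := exists_l1_eq_fillNorm hη m
  calc fillNorm η' (η x) = fillNorm η' (η' (φ x)) := by rw [← hφ, LinearMap.comp_apply]
    _ ≤ l1 (φ x) := fillNorm_le_l1 η' (φ x)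
    _ ≤ C * fillNorm η (η x) := hx ▸ hC x

end fillNorm

theorem filling_norms_linearly_equivalent_general
    (G : Type*) [Group G]
    (M : Type*) [AddCommGroup M] [Module (MonoidAlgebra ℤ G) M]
    (r r' : ℕ)
    (η : (Fin r →₀ MonoidAlgebra ℤ G) →ₗ[MonoidAlgebra ℤ G] M)
    (hη : Function.Surjective η)
    (η' : (Fin r' →₀ MonoidAlgebra ℤ G) →ₗ[MonoidAlgebra ℤ G] M)
    (hη' : Function.Surjective η') :
    ∃ C : ℕ, 0 < C ∧ ∀ m : M,
      fillNorm η' m ≤ C * fillNorm η m ∧ fillNorm η m ≤ C * fillNorm η' m := by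
  obtain ⟨C₁, h₁⟩ := exists_fillNorm_le_mul_fillNorm hη hη'
  obtain ⟨C₂, h₂⟩ := exists_fillNorm_le_mul_fillNorm hη' hη
  refine ⟨C₁ + C₂ + 1, by omega, fun m => ⟨?_, ?_⟩⟩
  · exact (h₁ m).trans (Nat.mul_le_mul_right _ (by omega))
  · exact (h₂ m).trans (Nat.mul_le_mul_right _ (by omega))

/-- Any two filling norms on a finitely generated `ℤ[G]`-module are linearly
equivalent. -/
theorem filling_norms_linearly_equivalent
    (G : Type*) [Group G]
    (M : Type*) [AddCommGroup M] [Module (MonoidAlgebra ℤ G) M]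
    [Module.Finite (MonoidAlgebra ℤ G) M]
    (r r' : ℕ)
    (η : (Fin r →₀ MonoidAlgebra ℤ G) →ₗ[MonoidAlgebra ℤ G] M)
    (hη : Function.Surjective η)
    (η' : (Fin r' →₀ MonoidAlgebra ℤ G) →ₗ[MonoidAlgebra ℤ G] M)
    (hη' : Function.Surjective η') :
    ∃ C : ℕ, 0 < C ∧ ∀ m : M,
      fillNorm η' m ≤ C * fillNorm η m ∧ fillNorm η m ≤ C * fillNorm η' m :=
  filling_norms_linearly_equivalent_general G M r r' η hη η' hη'
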